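/- The function y: [0,∞) → ℝ² defined by y(t) = (sin t, 1 - cos t) for t ∈ [2nπ, 2(n+1)π) with n even, and y(t) = (sin t, cos t - 1) for t ∈ [2(n+1)π, 2(n+2)π) with n even, is continuous, satisfies y(0) = (0,0), and solves the ODE y₁' = 1 - y₂, y₂' = y₁ on the region {y₂ ≥ 0} and y₁' = y₂ + 1, y₂' = -y₁ on the region {y₂ < 0}. -/

import Mathlib

/-!
On `[0, ∞)` the curve is `t ↦ (sin t, 2 sin (t/2) |sin (t/2)|)`: indeed `1 - cos t = 2 sin² (t/2)`,
and `sin (t/2)` is `≥ 0` on `[2nπ, 2(n+1)π]` and `≤ 0` on `[2(n+1)π, 2(n+2)π]` for even `n`.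
Since `x ↦ x |x|` is differentiable with derivative `2 |x|`, this closed form is differentiable
everywhere, and the ODE reduces to the half-angle formulas, the sign of `y₂` being that of
`sin (t/2)`.
-/

open Real Set Topology

theorem hasDerivAt_mul_abs (x : ℝ) : HasDerivAt (fun x : ℝ => x * |x|) (2 * |x|) x := by
  rcases lt_trichotomy x 0 with hx | rfl | hx
  · have hsq : (fun x : ℝ => -x ^ 2) =ᶠ[𝓝 x] fun x => x * |x| := by
      filter_upwards [Iio_mem_nhds hx] with z hz
      rw [abs_of_neg hz]; ring
    refine ((hasDerivAt_pow 2 x).neg.congr_of_eventuallyEq hsq.symm).congr_deriv ?_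
    rw [abs_of_neg hx]; ring
  · rw [hasDerivAt_iff_tendsto_slope_zero]
    have hslope : (fun t : ℝ => |t|) =ᶠ[𝓝[≠] 0] fun t => t⁻¹ • ((0 + t) * |0 + t| - 0 * |0|) := by
      filter_upwards [self_mem_nhdsWithin] with t ht
      simp [inv_mul_cancel_left₀ (show t ≠ 0 from ht)]
    simpa using (continuous_abs.tendsto' 0 0 abs_zero).mono_left nhdsWithin_le_nhds |>.congr' hslope
  · have hsq : (fun x : ℝ => x ^ 2) =ᶠ[𝓝 x] fun x => x * |x| := by
      filter_upwards [Ioi_mem_nhds hx] with z hz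
      rw [abs_of_pos hz]; ring
    refine ((hasDerivAt_pow 2 x).congr_of_eventuallyEq hsq.symm).congr_deriv ?_
    rw [abs_of_pos hx]; ring

noncomputable def figureEight (t : ℝ) : ℝ × ℝ := (sin t, 2 * (sin (t / 2) * |sin (t / 2)|))

noncomputable def figureEightField (p : ℝ × ℝ) : ℝ × ℝ :=
  if 0 ≤ p.2 then (1 - p.2, p.1) else (p.2 + 1, -p.1)

theorem cos_eq_one_sub_two_mul_sin_half_sq (t : ℝ) : cos t = 1 - 2 * sin (t / 2) ^ 2 := by
  conv_lhs => rw [← mul_div_cancel₀ t two_ne_zero, cos_two_mul, cos_sq']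
  ring

theorem sin_eq_two_mul_sin_half_mul_cos_half (t : ℝ) : sin t = 2 * sin (t / 2) * cos (t / 2) := by
  rw [← sin_two_mul, mul_div_cancel₀ t two_ne_zero]

theorem hasDerivAt_figureEight (t : ℝ) :
    HasDerivAt figureEight (figureEightField (figureEight t)) t := by
  have hhalf : HasDerivAt (fun t => sin (t / 2)) (cos (t / 2) / 2) t := by
    refine ((hasDerivAt_id t).div_const 2).sin.congr_deriv ?_
    simp [div_eq_mul_inv]
  have hd := (hasDerivAt_sin t).prodMk (((hasDerivAt_mul_abs _).comp t hhalf).const_mul 2)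
  refine hd.congr_deriv ?_
  rw [figureEight, figureEightField, cos_eq_one_sub_two_mul_sin_half_sq t,
    sin_eq_two_mul_sin_half_mul_cos_half t]
  rcases le_or_gt 0 (sin (t / 2)) with hs | hs
  · have h0 : 0 ≤ 2 * (sin (t / 2) * |sin (t / 2)|) := by positivity
    rw [if_pos h0, abs_of_nonneg hs]
    simp only [Prod.mk.injEq]
    constructor <;> ring
  · have h0 : ¬ 0 ≤ 2 * (sin (t / 2) * |sin (t / 2)|) := by
      rw [abs_of_neg hs]; nlinarith
    rw [if_neg h0, abs_of_neg hs]
    simp only [Prod.mk.injEq]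
    constructor <;> ring

theorem sin_half_nonneg_of_mem_Icc {n : ℕ} (hn : Even n) {t : ℝ}
    (ht : t ∈ Icc (2 * n * π) (2 * (n + 1) * π)) : 0 ≤ sin (t / 2) := by
  obtain ⟨m, rfl⟩ := hn
  rw [← sin_sub_nat_mul_two_pi _ m]
  push_cast at ht
  apply sin_nonneg_of_nonneg_of_le_pi <;> linarith [ht.1, ht.2]

theorem sin_half_nonpos_of_mem_Icc {n : ℕ} (hn : Even n) {t : ℝ}
    (ht : t ∈ Icc (2 * (n + 1) * π) (2 * (n + 2) * π)) : sin (t / 2) ≤ 0 := by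
  obtain ⟨m, rfl⟩ := hn
  rw [← sin_sub_nat_mul_two_pi _ (m + 1)]
  push_cast at ht ⊢
  apply sin_nonpos_of_nonpos_of_neg_pi_le <;> linarith [ht.1, ht.2]

theorem exists_even_mem_Ico (t : ℝ) (ht : 0 ≤ t) : ∃ n : ℕ, Even n ∧
    (t ∈ Ico (2 * n * π) (2 * (n + 1) * π) ∨ t ∈ Ico (2 * (n + 1) * π) (2 * (n + 2) * π)) := by
  set m := ⌊t / (4 * π)⌋₊
  have hlo : m * (4 * π) ≤ t := (le_div_iff₀ (by positivity)).1 (Nat.floor_le (by positivity))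
  have hhi : t < (m + 1) * (4 * π) := (div_lt_iff₀ (by positivity)).1 (Nat.lt_floor_add_one _)
  refine ⟨2 * m, even_two_mul m, ?_⟩
  push_cast
  rcases lt_or_ge t (2 * (2 * m + 1) * π) with h | h
  · exact Or.inl ⟨by linarith, h⟩
  · exact Or.inr ⟨h, by linarith⟩

theorem eqOn_figureEight {y : ℝ → ℝ × ℝ}
    (h1 : ∀ n : ℕ, Even n → ∀ t ∈ Ico (2 * (n : ℝ) * π) (2 * ((n : ℝ) + 1) * π),
      y t = (sin t, 1 - cos t))
    (h2 : ∀ n : ℕ, Even n → ∀ t ∈ Ico (2 * ((n : ℝ) + 1) * π) (2 * ((n : ℝ) + 2) * π),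
      y t = (sin t, cos t - 1)) :
    EqOn y figureEight (Ici 0) := by
  intro t ht
  obtain ⟨n, hn, ht | ht⟩ := exists_even_mem_Ico t ht
  · rw [h1 n hn t ht, figureEight, cos_eq_one_sub_two_mul_sin_half_sq,
      abs_of_nonneg (sin_half_nonneg_of_mem_Icc hn (Ico_subset_Icc_self ht))]
    congr 1; ring
  · rw [h2 n hn t ht, figureEight, cos_eq_one_sub_two_mul_sin_half_sq,
      abs_of_nonpos (sin_half_nonpos_of_mem_Icc hn (Ico_subset_Icc_self ht))]
    congr 1; ring

/-- The piecewise curve `y(t) = (sin t, 1 - cos t)` on `[2nπ, 2(n+1)π)` (`n` even) and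
`y(t) = (sin t, cos t - 1)` on `[2(n+1)π, 2(n+2)π)` (`n` even) is continuous on `[0,∞)`,
starts at the origin and solves the ODE `y₁' = 1 - y₂, y₂' = y₁` where `y₂ ≥ 0` and
`y₁' = y₂ + 1, y₂' = -y₁` where `y₂ < 0`. -/
theorem stmt_11 (y : ℝ → ℝ × ℝ)
    (h1 : ∀ n : ℕ, Even n → ∀ t ∈ Set.Ico (2 * (n : ℝ) * π) (2 * ((n : ℝ) + 1) * π),
      y t = (Real.sin t, 1 - Real.cos t))
    (h2 : ∀ n : ℕ, Even n → ∀ t ∈ Set.Ico (2 * ((n : ℝ) + 1) * π) (2 * ((n : ℝ) + 2) * π),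
      y t = (Real.sin t, Real.cos t - 1)) :
    ContinuousOn y (Set.Ici 0) ∧ y 0 = (0, 0) ∧
    ∀ t ∈ Set.Ici (0 : ℝ),
      (0 ≤ (y t).2 → HasDerivWithinAt y (1 - (y t).2, (y t).1) (Set.Ici 0) t) ∧
      ((y t).2 < 0 → HasDerivWithinAt y ((y t).2 + 1, -(y t).1) (Set.Ici 0) t) := by
  have hy := eqOn_figureEight h1 h2
  have hderiv : ∀ t ∈ Ici (0 : ℝ),
      HasDerivWithinAt y (figureEightField (y t)) (Ici 0) t := fun t ht => by
    rw [hy ht]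
    exact (hasDerivAt_figureEight t).hasDerivWithinAt.congr hy (hy ht)
  refine ⟨fun t ht => (hderiv t ht).continuousWithinAt, by simp [hy self_mem_Ici, figureEight],
    fun t ht => ⟨fun h => ?_, fun h => ?_⟩⟩
  · simpa [figureEightField, h] using hderiv t ht
  · simpa [figureEightField, h.not_ge] using hderiv t ht
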